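/- Let δ ∈ (0,1] and let (X,Y) be a pair of {0,1}-valued random variables with joint probabilities P_{ij} = Pr[X=i, Y=j]. Then ((1+δ)/2)(H(X) + H(Y)) − H(X,Y) − log₂(δ)·Pr[X ≠ Y] + log₂(1+δ) − δ ≥ 0, where H denotes binary (base-2) Shannon entropy, provided the joint distribution arises from correlated sets, i.e., P_{ij} = α_i β_j γ_{ij} for some nonnegative α, β and γ_{ij} ∈ {1, δ} with γ_{00}=γ_{11}=1 and γ_{01}=γ_{10}=δ (equivalently P_{00}P_{11}/(P_{01}P_{10}) has the appropriate form); in particular, the inequality holds whenever either all four P_{ij} are positive, or the zeros of the matrix (P_{ij}) occur only as full rows/columns. -/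

import Mathlib

open Finset Real

/-- One term of base-2 Shannon entropy, with the convention `0 · log 0 = 0`. -/
noncomputable def ent (p : ℝ) : ℝ := -(p * Real.logb 2 p)

/-!
In nats the inequality is variational. By Gibbs' inequality, `H(X,Y) ≤ log N - ∑ P_ij log w_ij`
for any positive weights `w` of total mass `N`; we take weights of correlated-sets shape,
`w_ij = α_i β_j γ_ij` with `α = (exp ((1+δ) s), 1)`, `β = (exp ((1+δ) t), 1)`. The marginal
entropies are then matched through the dual formula `h(p) = inf_s (log (2 cosh s) + (1 - 2p) s)`.
What is left is a bound on `log N`: Cauchy–Schwarz reduces it to the one-variable inequality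
`cosh (γ u) + (γ - 1) ≤ γ (cosh u)^γ` for `γ = 1 + δ ∈ [1, 2]`, proved by differentiating in `u`.
The derivative comparison `sinh (γ u) ≤ γ sinh u (cosh u)^(γ-1)` becomes, under `y = exp (2u)`, the
Hermite–Hadamard inequality for the concave function `t ↦ t^(γ-1)` on `[1, y]`.
-/

lemma le_of_hasDerivAt_nonneg {f f' : ℝ → ℝ} {a b : ℝ} (hab : a ≤ b)
    (hf : ∀ t ∈ Set.Icc a b, HasDerivAt f (f' t) t) (hf' : ∀ t ∈ Set.Ioo a b, 0 ≤ f' t) :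
    f a ≤ f b :=
  monotoneOn_of_hasDerivWithinAt_nonneg (convex_Icc a b)
    (fun t ht => (hf t ht).continuousAt.continuousWithinAt)
    (fun t ht => (hf t (interior_subset ht)).hasDerivWithinAt)
    (fun t ht => hf' t (by rwa [interior_Icc] at ht)) (Set.left_mem_Icc.2 hab)
    (Set.right_mem_Icc.2 hab) hab

lemma exp_two_mul_sub_one (x : ℝ) : exp (2 * x) - 1 = 2 * exp x * sinh x := by
  rw [sinh_eq, two_mul, exp_add, exp_neg]
  field_simp

lemma exp_two_mul_add_one (x : ℝ) : exp (2 * x) + 1 = 2 * exp x * cosh x := by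
  rw [cosh_eq, two_mul, exp_add, exp_neg]
  field_simp

lemma rpow_le_tangent {w y s : ℝ} (hw : 0 < w) (hy : 0 ≤ y) (hs₀ : 0 ≤ s) (hs₁ : s ≤ 1) :
    y ^ s ≤ w ^ s + s * w ^ (s - 1) * (y - w) := by
  have bernoulli : (1 + (y / w - 1)) ^ s ≤ 1 + s * (y / w - 1) :=
    rpow_one_add_le_one_add_mul_self (by linarith [div_nonneg hy hw.le]) hs₀ hs₁
  rw [add_sub_cancel, div_rpow hy hw.le, div_le_iff₀ (rpow_pos_of_pos hw s)] at bernoulli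
  rw [rpow_sub_one hw.ne']
  calc y ^ s ≤ (1 + s * (y / w - 1)) * w ^ s := bernoulli
    _ = w ^ s + s * (w ^ s / w) * (y - w) := by field_simp

lemma rpow_sub_one_le_mul_midpoint_rpow {γ y : ℝ} (hγ₁ : 1 ≤ γ) (hγ₂ : γ ≤ 2) (hy : 1 ≤ y) :
    y ^ γ - 1 ≤ γ * (y - 1) * ((y + 1) / 2) ^ (γ - 1) := by
  have hderiv : ∀ t ∈ Set.Icc 1 y,
      HasDerivAt (fun t => γ * (t - 1) * ((t + 1) / 2) ^ (γ - 1) - t ^ γ)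
      (γ * ((t + 1) / 2) ^ (γ - 1) + γ * (t - 1) * ((γ - 1) * ((t + 1) / 2) ^ (γ - 1 - 1) / 2)
        - γ * t ^ (γ - 1)) t := by
    intro t ht
    have ht₀ : 0 < t := by linarith [ht.1]
    have hmid : HasDerivAt (fun t : ℝ => ((t + 1) / 2) ^ (γ - 1))
        ((γ - 1) * ((t + 1) / 2) ^ (γ - 1 - 1) / 2) t := by
      convert (((hasDerivAt_id' t).add_const 1).div_const 2).rpow_const
        (p := γ - 1) (Or.inl (by positivity)) using 1
      ring
    have hlin : HasDerivAt (fun t : ℝ => γ * (t - 1)) γ t := by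
      simpa using ((hasDerivAt_id t).sub_const 1).const_mul γ
    exact (hlin.mul hmid).sub (hasDerivAt_rpow_const (Or.inl ht₀.ne'))
  have key := le_of_hasDerivAt_nonneg hy hderiv fun t ht => by
    have hw : 0 < (t + 1) / 2 := by linarith [ht.1]
    -- `t ↦ t ^ (γ - 1)` is concave, so it lies below its tangent at the midpoint
    have tangent :=
      rpow_le_tangent hw (by linarith [ht.1]) (by linarith) (by linarith : γ - 1 ≤ 1)
    rw [show t - (t + 1) / 2 = (t - 1) / 2 by ring] at tangent
    nlinarith [mul_le_mul_of_nonneg_left tangent (by linarith : (0:ℝ) ≤ γ)]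
  simp only [sub_self, mul_zero, zero_mul, one_rpow] at key
  linarith

lemma sinh_mul_le {γ u : ℝ} (hγ₁ : 1 ≤ γ) (hγ₂ : γ ≤ 2) (hu : 0 ≤ u) :
    sinh (γ * u) ≤ γ * sinh u * cosh u ^ (γ - 1) := by
  have key := rpow_sub_one_le_mul_midpoint_rpow hγ₁ hγ₂ (one_le_exp (by linarith : 0 ≤ 2 * u))
  have hpow : exp (2 * u) ^ γ = exp (2 * (γ * u)) := by rw [← exp_mul]; ring_nf
  have hmid : (exp (2 * u) + 1) / 2 = exp u * cosh u := by rw [exp_two_mul_add_one]; ring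
  rw [hpow, hmid, exp_two_mul_sub_one, exp_two_mul_sub_one,
    mul_rpow (exp_pos u).le (cosh_pos u).le, ← exp_mul] at key
  have hexp : exp u * exp (u * (γ - 1)) = exp (γ * u) := by rw [← exp_add]; ring_nf
  refine le_of_mul_le_mul_left (key.trans_eq ?_) (by positivity : 0 < 2 * exp (γ * u))
  rw [← hexp]
  ring

lemma cosh_mul_add_le {γ : ℝ} (hγ₁ : 1 ≤ γ) (hγ₂ : γ ≤ 2) (u : ℝ) :
    cosh (γ * u) + (γ - 1) ≤ γ * cosh u ^ γ := by
  wlog hu : 0 ≤ u generalizing u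
  · simpa [mul_neg] using this (-u) (by linarith)
  have key := le_of_hasDerivAt_nonneg (f := fun t => γ * cosh t ^ γ - cosh (γ * t))
    (f' := fun t => γ * (sinh t * γ * cosh t ^ (γ - 1)) - sinh (γ * t) * (γ * 1)) hu
    (fun t _ => (((hasDerivAt_cosh t).rpow_const (Or.inl (cosh_pos t).ne')).const_mul γ).sub
      ((hasDerivAt_id' t).const_mul γ).cosh)
    (fun t ht => by nlinarith [sinh_mul_le hγ₁ hγ₂ ht.1.le])
  simp only [cosh_zero, one_rpow, mul_zero, mul_one] at key
  linarith

lemma log_partition_le {δ : ℝ} (hδ₀ : 0 ≤ δ) (hδ₁ : δ ≤ 1) (s t : ℝ) :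
    log (exp ((1 + δ) * s) * exp ((1 + δ) * t) + δ * exp ((1 + δ) * s)
        + δ * exp ((1 + δ) * t) + 1)
      ≤ log (2 * (1 + δ)) + (1 + δ) / 2 * (s + log (cosh s) + t + log (cosh t)) := by
  have diag : ∀ s, log (exp ((1 + δ) * s) ^ 2 + 2 * δ * exp ((1 + δ) * s) + 1)
      ≤ log (2 * (1 + δ)) + (1 + δ) * (s + log (cosh s)) := fun s => by
    have hcosh := cosh_mul_add_le (by linarith : 1 ≤ 1 + δ) (by linarith) s
    rw [add_sub_cancel_left] at hcosh
    calc log (exp ((1 + δ) * s) ^ 2 + 2 * δ * exp ((1 + δ) * s) + 1)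
        = log (2 * exp ((1 + δ) * s) * (cosh ((1 + δ) * s) + δ)) := by
          rw [sq, ← exp_add, ← two_mul]
          congr 1
          linarith [exp_two_mul_add_one ((1 + δ) * s)]
      _ ≤ log (2 * (1 + δ) * exp ((1 + δ) * s) * cosh s ^ (1 + δ)) := by
          refine log_le_log (by positivity) ?_
          nlinarith [mul_le_mul_of_nonneg_left hcosh (by positivity : 0 ≤ 2 * exp ((1 + δ) * s))]
      _ = log (2 * (1 + δ)) + (1 + δ) * (s + log (cosh s)) := by
          rw [log_mul (by positivity) (by positivity), log_mul (by positivity) (by positivity),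
            log_exp, log_rpow (cosh_pos s)]
          ring
  set X := exp ((1 + δ) * s)
  set Y := exp ((1 + δ) * t)
  -- Cauchy–Schwarz: the partition function is `A B + (1 - δ²)` with `A = X + δ`, `B = Y + δ`
  have cauchySchwarz : (X * Y + δ * X + δ * Y + 1) ^ 2
      ≤ (X ^ 2 + 2 * δ * X + 1) * (Y ^ 2 + 2 * δ * Y + 1) := by
    nlinarith [mul_nonneg (by nlinarith : 0 ≤ 1 - δ ^ 2) (sq_nonneg (X - Y))]
  have hlog := log_le_log (by positivity) cauchySchwarz
  rw [log_pow, Nat.cast_ofNat, log_mul (by positivity) (by positivity)] at hlog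
  linarith [diag s, diag t]

lemma mul_log_add_negMulLog_le {a r : ℝ} (ha : 0 ≤ a) (hr : 0 < r) :
    a * log r + negMulLog a ≤ r - a := by
  rcases ha.eq_or_lt with rfl | ha
  · simpa using hr.le
  · have h := mul_le_mul_of_nonneg_left (log_le_sub_one_of_pos (div_pos hr ha)) ha.le
    rw [log_div hr.ne' ha.ne', mul_sub_one, mul_div_cancel₀ _ ha.ne'] at h
    rw [negMulLog]
    linarith

lemma sum_negMulLog_le_log_sum_sub {ι : Type*} (s : Finset ι) {p w : ι → ℝ}
    (hp : ∀ i ∈ s, 0 ≤ p i) (hw : ∀ i ∈ s, 0 < w i) (hp₁ : ∑ i ∈ s, p i = 1) :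
    ∑ i ∈ s, negMulLog (p i) ≤ log (∑ i ∈ s, w i) - ∑ i ∈ s, p i * log (w i) := by
  have hs : s.Nonempty := nonempty_of_sum_ne_zero (by rw [hp₁]; exact one_ne_zero)
  set Z := ∑ i ∈ s, w i
  have hZ : 0 < Z := sum_pos hw hs
  have key := sum_le_sum fun i hi =>
    mul_log_add_negMulLog_le (hp i hi) (div_pos (hw i hi) hZ)
  have hterm : ∀ i ∈ s, p i * log (w i / Z) = p i * log (w i) - p i * log Z := fun i hi => by
    rw [log_div (hw i hi).ne' hZ.ne', mul_sub]
  rw [sum_add_distrib, sum_congr rfl hterm, sum_sub_distrib, ← sum_mul, hp₁, sum_sub_distrib,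
    ← sum_div, div_self hZ.ne', hp₁] at key
  linarith

lemma exists_log_two_cosh_add_le_binEntropy_add {p ε : ℝ} (hp₀ : 0 ≤ p) (hp₁ : p ≤ 1)
    (hε : 0 < ε) : ∃ s, log (2 * cosh s) + (1 - 2 * p) * s ≤ binEntropy p + ε := by
  wlog hp : p < 1 generalizing p
  · obtain ⟨s, hs⟩ := this (p := 1 - p) (by linarith) (by linarith) (by linarith)
    refine ⟨-s, ?_⟩
    rw [cosh_neg, ← binEntropy_one_sub]
    linarith
  have key : ∀ s, log (2 * cosh s) + (1 - 2 * p) * s = log (exp (2 * s) + 1) - 2 * p * s := by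
    intro s
    rw [exp_two_mul_add_one, mul_right_comm, log_mul (by positivity) (exp_pos s).ne', log_exp]
    ring
  rcases hp₀.eq_or_lt with rfl | hp₀
  · refine ⟨log ε / 2, ?_⟩
    rw [key, mul_div_cancel₀ _ two_ne_zero, exp_log hε]
    simpa using log_le_sub_one_of_pos (by linarith : 0 < ε + 1)
  · refine ⟨log (p / (1 - p)) / 2, ?_⟩
    have hq : 0 < 1 - p := by linarith
    rw [key, mul_div_cancel₀ _ two_ne_zero, exp_log (div_pos hp₀ hq),
      show p / (1 - p) + 1 = (1 - p)⁻¹ by field_simp; ring, log_inv, log_div hp₀.ne' hq.ne',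
      binEntropy_eq_negMulLog_add_negMulLog_one_sub, negMulLog, negMulLog]
    linarith

theorem negMulLog_add_le_binEntropy {δ a b c d : ℝ} (hδ₀ : 0 < δ) (hδ₁ : δ ≤ 1) (ha : 0 ≤ a)
    (hb : 0 ≤ b) (hc : 0 ≤ c) (hd : 0 ≤ d) (hsum : a + b + c + d = 1) :
    negMulLog a + negMulLog b + negMulLog c + negMulLog d + log δ * (b + c) + δ * log 2
      ≤ (1 + δ) / 2 * (binEntropy (a + b) + binEntropy (a + c)) + log (1 + δ) := by
  refine le_of_forall_pos_le_add fun ε hε => ?_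
  have hγ : 0 < 1 + δ := by linarith
  obtain ⟨s, hs⟩ := exists_log_two_cosh_add_le_binEntropy_add (p := a + b) (by positivity)
    (by linarith) (div_pos hε hγ)
  obtain ⟨t, ht⟩ := exists_log_two_cosh_add_le_binEntropy_add (p := a + c) (by positivity)
    (by linarith) (div_pos hε hγ)
  have gibbs := sum_negMulLog_le_log_sum_sub univ (p := ![a, b, c, d])
    (w := ![exp ((1 + δ) * s) * exp ((1 + δ) * t), δ * exp ((1 + δ) * s),
      δ * exp ((1 + δ) * t), 1])
    (by simp [Fin.forall_fin_succ, *]) (by simp [Fin.forall_fin_succ, exp_pos, *])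
    (by simp [Fin.sum_univ_four, hsum])
  simp only [Fin.sum_univ_four, Matrix.cons_val, log_mul hδ₀.ne' (exp_pos _).ne',
    log_mul (exp_pos _).ne' (exp_pos _).ne', log_exp, log_one] at gibbs
  have partition := log_partition_le hδ₀.le hδ₁ s t
  have hs' := mul_le_mul_of_nonneg_left hs (by positivity : 0 ≤ (1 + δ) / 2)
  have ht' := mul_le_mul_of_nonneg_left ht (by positivity : 0 ≤ (1 + δ) / 2)
  have hε' : (1 + δ) / 2 * (ε / (1 + δ)) = ε / 2 := by field_simp
  rw [log_mul two_ne_zero (cosh_pos s).ne'] at hs'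
  rw [log_mul two_ne_zero (cosh_pos t).ne'] at ht'
  rw [log_mul two_ne_zero hγ.ne'] at partition
  linarith

theorem single_bit_entropy_inequality (δ : ℝ) (hδ : δ ∈ Set.Ioc (0:ℝ) 1)
    (P : Bool → Bool → ℝ) (hP : ∀ i j, 0 ≤ P i j)
    (hsum : ∑ i : Bool, ∑ j : Bool, P i j = 1) :
    0 ≤ ((1+δ)/2) *
          ((ent (P false false + P false true) + ent (P true false + P true true))
            + (ent (P false false + P true false) + ent (P false true + P true true)))
        - (∑ i : Bool, ∑ j : Bool, ent (P i j))
        - Real.logb 2 δ * (P false true + P true false)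
        + Real.logb 2 (1+δ) - δ := by
  obtain ⟨hδ₀, hδ₁⟩ := hδ
  simp only [Fintype.sum_bool] at hsum ⊢
  have key := negMulLog_add_le_binEntropy hδ₀ hδ₁ (hP false false) (hP false true)
    (hP true false) (hP true true) (by linarith)
  simp only [binEntropy_eq_negMulLog_add_negMulLog_one_sub] at key
  rw [show 1 - (P false false + P false true) = P true false + P true true by linarith,
    show 1 - (P false false + P true false) = P false true + P true true by linarith] at key
  have ent_eq (p : ℝ) : ent p = negMulLog p / log 2 := by rw [ent, negMulLog, logb]; ring
  simp only [ent_eq, logb]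
  rw [← mul_nonneg_iff_of_pos_right (log_pos one_lt_two)]
  refine (sub_nonneg.2 key).trans_eq ?_
  field_simp
  ring
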